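/- arXiv:1804.05920 — 8 statements merged into one kernel-verified Lean document; each statement's English description precedes it below -/
import Mathlib

section
/- Let G be a group with finite symmetric generating sets S and S', and let Φ be a uniformly continuous action of G on a metric space (X,d). Then Φ is chain transitive with respect to S if and only if Φ is chain transitive with respect to S', and the chain recurrent sets coincide: CR^S(Φ) = CR^{S'}(Φ). -/
/-- `f : G → X` is a `δ`-pseudo orbit of the action `Φ` with respect to
the generating set `S`. -/
def IsPseudoOrbit {G X : Type*} [Group G] [MetricSpace X]
    (Φ : G → X → X) (S : Finset G) (δ : ℝ) (f : G → X) : Prop :=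
  ∀ s ∈ S, ∀ g : G, dist (Φ s (f g)) (f (s * g)) < δ

/-- `x R^S_δ y` : there is a `δ`-pseudo orbit of `Φ` passing through `x` and `y`
at distinct group elements. -/
def RelDelta {G X : Type*} [Group G] [MetricSpace X]
    (Φ : G → X → X) (S : Finset G) (δ : ℝ) (x y : X) : Prop :=
  ∃ f : G → X, IsPseudoOrbit Φ S δ f ∧ ∃ h k : G, h ≠ k ∧ f h = x ∧ f k = y

/-- `x R^S y` : `x R^S_δ y` for every `δ > 0`. -/
def ChainRel {G X : Type*} [Group G] [MetricSpace X]
    (Φ : G → X → X) (S : Finset G) (x y : X) : Prop :=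
  ∀ δ : ℝ, 0 < δ → RelDelta Φ S δ x y

/-- `Φ` is chain transitive with respect to `S`. -/
def ChainTransitive {G X : Type*} [Group G] [MetricSpace X]
    (Φ : G → X → X) (S : Finset G) : Prop :=
  ∀ x y : X, ChainRel Φ S x y

/-- The chain recurrent set `CR^S(Φ)`. -/
def ChainRecurrentSet {G X : Type*} [Group G] [MetricSpace X]
    (Φ : G → X → X) (S : Finset G) : Set X :=
  {x | ChainRel Φ S x x}

/-!
For `g` in the subgroup generated by `S`, the error `d(Φ_g (f a), f (g a))` of a `δ`-pseudo orbit
`f` along `g` tends to `0` with `δ`, uniformly in `f` and `a`: this holds for `g ∈ S` by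
definition, and passes to products and inverses by the triangle inequality and the uniform
continuity of the `Φ_g`. Since `S'` is finite, small enough `δ`-pseudo orbits for `S` are
`ε`-pseudo orbits for `S'`, so the chain relations of `S` and `S'` coincide.
-/

section PseudoOrbitControl

variable {G X : Type*} [Group G] [MetricSpace X] {Φ : G → X → X} {S : Finset G}

lemma IsPseudoOrbit.mono {δ δ' : ℝ} {f : G → X} (h : IsPseudoOrbit Φ S δ f) (hle : δ ≤ δ') :
    IsPseudoOrbit Φ S δ' f :=
  fun s hs g => (h s hs g).trans_le hle

variable (Φ S) in
def PseudoOrbitsControl (g : G) : Prop :=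
  ∀ ε > 0, ∃ δ > 0, ∀ f : G → X, IsPseudoOrbit Φ S δ f → ∀ a, dist (Φ g (f a)) (f (g * a)) < ε

lemma pseudoOrbitsControl_of_mem {s : G} (hs : s ∈ S) : PseudoOrbitsControl Φ S s :=
  fun ε hε => ⟨ε, hε, fun _ hf a => hf s hs a⟩

lemma pseudoOrbitsControl_one (hΦ1 : ∀ x : X, Φ 1 x = x) : PseudoOrbitsControl Φ S 1 :=
  fun ε hε => ⟨ε, hε, fun _ _ a => by simpa [hΦ1] using hε⟩

lemma PseudoOrbitsControl.mul (hΦmul : ∀ g h : G, ∀ x : X, Φ (g * h) x = Φ g (Φ h x))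
    {g₁ g₂ : G} (hg₁uc : UniformContinuous (Φ g₁))
    (hg₁ : PseudoOrbitsControl Φ S g₁) (hg₂ : PseudoOrbitsControl Φ S g₂) :
    PseudoOrbitsControl Φ S (g₁ * g₂) := by
  intro ε hε
  obtain ⟨η, hη, hcont⟩ := Metric.uniformContinuous_iff.mp hg₁uc (ε / 2) (half_pos hε)
  obtain ⟨δ₁, hδ₁, H₁⟩ := hg₁ (ε / 2) (half_pos hε)
  obtain ⟨δ₂, hδ₂, H₂⟩ := hg₂ η hη
  refine ⟨min δ₁ δ₂, lt_min hδ₁ hδ₂, fun f hf a => ?_⟩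
  calc dist (Φ (g₁ * g₂) (f a)) (f (g₁ * g₂ * a))
      ≤ dist (Φ g₁ (Φ g₂ (f a))) (Φ g₁ (f (g₂ * a)))
          + dist (Φ g₁ (f (g₂ * a))) (f (g₁ * (g₂ * a))) := by
        rw [hΦmul, mul_assoc]; exact dist_triangle _ _ _
    _ < ε / 2 + ε / 2 :=
        add_lt_add (hcont (H₂ f (hf.mono (min_le_right _ _)) a))
          (H₁ f (hf.mono (min_le_left _ _)) (g₂ * a))
    _ = ε := add_halves ε

lemma PseudoOrbitsControl.inv (hΦ1 : ∀ x : X, Φ 1 x = x)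
    (hΦmul : ∀ g h : G, ∀ x : X, Φ (g * h) x = Φ g (Φ h x))
    {g : G} (hginvuc : UniformContinuous (Φ g⁻¹)) (hg : PseudoOrbitsControl Φ S g) :
    PseudoOrbitsControl Φ S g⁻¹ := by
  intro ε hε
  obtain ⟨η, hη, hcont⟩ := Metric.uniformContinuous_iff.mp hginvuc ε hε
  obtain ⟨δ, hδ, H⟩ := hg η hη
  refine ⟨δ, hδ, fun f hf a => ?_⟩
  -- apply `Φ g⁻¹` to the `g`-step of `f` ending at `a`
  have hstep : dist (Φ g (f (g⁻¹ * a))) (f a) < η := by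
    simpa only [mul_inv_cancel_left] using H f hf (g⁻¹ * a)
  have hback : Φ g⁻¹ (Φ g (f (g⁻¹ * a))) = f (g⁻¹ * a) := by
    rw [← hΦmul, inv_mul_cancel, hΦ1]
  simpa only [hback, dist_comm] using hcont hstep

lemma pseudoOrbitsControl_of_mem_closure (hΦ1 : ∀ x : X, Φ 1 x = x)
    (hΦmul : ∀ g h : G, ∀ x : X, Φ (g * h) x = Φ g (Φ h x))
    (hΦuc : ∀ g : G, UniformContinuous (Φ g)) {g : G} (hg : g ∈ Subgroup.closure (S : Set G)) :
    PseudoOrbitsControl Φ S g := by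
  induction hg using Subgroup.closure_induction with
  | mem s hs => exact pseudoOrbitsControl_of_mem hs
  | one => exact pseudoOrbitsControl_one hΦ1
  | mul g₁ g₂ _ _ hg₁ hg₂ => exact hg₁.mul hΦmul (hΦuc g₁) hg₂
  | inv g _ hg => exact hg.inv hΦ1 hΦmul (hΦuc g⁻¹)

lemma exists_isPseudoOrbit_of_subset_closure (hΦ1 : ∀ x : X, Φ 1 x = x)
    (hΦmul : ∀ g h : G, ∀ x : X, Φ (g * h) x = Φ g (Φ h x))
    (hΦuc : ∀ g : G, UniformContinuous (Φ g)) {T : Finset G}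
    (hT : (T : Set G) ⊆ Subgroup.closure (S : Set G)) {ε : ℝ} (hε : 0 < ε) :
    ∃ δ > 0, ∀ f : G → X, IsPseudoOrbit Φ S δ f → IsPseudoOrbit Φ T ε f := by
  classical
  induction T using Finset.induction_on with
  | empty => exact ⟨1, one_pos, fun f _ t ht => absurd ht (Finset.notMem_empty t)⟩
  | insert t T _ ih =>
    rw [Finset.coe_insert, Set.insert_subset_iff] at hT
    obtain ⟨δ₁, hδ₁, H₁⟩ := pseudoOrbitsControl_of_mem_closure hΦ1 hΦmul hΦuc hT.1 ε hε
    obtain ⟨δ₂, hδ₂, H₂⟩ := ih hT.2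
    refine ⟨min δ₁ δ₂, lt_min hδ₁ hδ₂, fun f hf u hu a => ?_⟩
    rcases Finset.mem_insert.mp hu with rfl | hu
    · exact H₁ f (hf.mono (min_le_left _ _)) a
    · exact H₂ f (hf.mono (min_le_right _ _)) u hu a

lemma ChainRel.of_subset_closure (hΦ1 : ∀ x : X, Φ 1 x = x)
    (hΦmul : ∀ g h : G, ∀ x : X, Φ (g * h) x = Φ g (Φ h x))
    (hΦuc : ∀ g : G, UniformContinuous (Φ g)) {T : Finset G}
    (hT : (T : Set G) ⊆ Subgroup.closure (S : Set G)) {x y : X} (h : ChainRel Φ S x y) :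
    ChainRel Φ T x y := by
  intro ε hε
  obtain ⟨δ, hδ, H⟩ := exists_isPseudoOrbit_of_subset_closure hΦ1 hΦmul hΦuc hT hε
  obtain ⟨f, hf, hxy⟩ := h δ hδ
  exact ⟨f, H f hf, hxy⟩

end PseudoOrbitControl

theorem chainTransitive_and_CR_independent_of_generating_set_general
    {G X : Type*} [Group G] [MetricSpace X] (Φ : G → X → X)
    (S S' : Finset G)
    (hSgen : Subgroup.closure (S : Set G) = ⊤)
    (hS'gen : Subgroup.closure (S' : Set G) = ⊤)
    (hΦ1 : ∀ x : X, Φ 1 x = x)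
    (hΦmul : ∀ g h : G, ∀ x : X, Φ (g * h) x = Φ g (Φ h x))
    (hΦuc : ∀ g : G, UniformContinuous (Φ g)) :
    (ChainTransitive Φ S ↔ ChainTransitive Φ S') ∧
      ChainRecurrentSet Φ S = ChainRecurrentSet Φ S' := by
  have hrel : ∀ x y : X, ChainRel Φ S x y ↔ ChainRel Φ S' x y := fun x y =>
    ⟨ChainRel.of_subset_closure hΦ1 hΦmul hΦuc (by simp [hSgen]),
      ChainRel.of_subset_closure hΦ1 hΦmul hΦuc (by simp [hS'gen])⟩
  exact ⟨forall₂_congr hrel, Set.ext fun x => hrel x x⟩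

/-- Chain transitivity and the chain recurrent set are independent of the
finite symmetric generating set. -/
theorem chainTransitive_and_CR_independent_of_generating_set
    {G X : Type*} [Group G] [MetricSpace X] (Φ : G → X → X)
    (S S' : Finset G)
    (hSsymm : ∀ s ∈ S, s⁻¹ ∈ S)
    (hSgen : Subgroup.closure (S : Set G) = ⊤)
    (hS'symm : ∀ s ∈ S', s⁻¹ ∈ S')
    (hS'gen : Subgroup.closure (S' : Set G) = ⊤)
    (hΦ1 : ∀ x : X, Φ 1 x = x)
    (hΦmul : ∀ g h : G, ∀ x : X, Φ (g * h) x = Φ g (Φ h x))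
    (hΦuc : ∀ g : G, UniformContinuous (Φ g)) :
    (ChainTransitive Φ S ↔ ChainTransitive Φ S') ∧
      ChainRecurrentSet Φ S = ChainRecurrentSet Φ S' :=
  chainTransitive_and_CR_independent_of_generating_set_general Φ S S' hSgen hS'gen hΦ1 hΦmul hΦuc
end

section
/- Let G be a group with a finite symmetric generating set S, let Φ be a uniformly continuous action of G on a metric space (X,d), and let Ψ be a uniformly continuous action of G on a metric space (Y,p). Suppose h : X → Y is a uniform conjugacy between Φ and Ψ, i.e. a uniform equivalence with h ∘ Φ_g = Ψ_g ∘ h for all g ∈ G. Then Φ is chain transitive with respect to S if and only if Ψ is chain transitive with respect to S. -/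
/-!
A uniformly continuous map `h` that intertwines the two actions pushes `ε`-pseudo orbits to
`δ`-pseudo orbits, where `ε` is a modulus of uniform continuity of `h` for `δ`; the group
elements at which the orbit passes through given points are unchanged. So `h` carries the chain
relation of `Φ` into that of `Ψ`, and if `h` is onto, chain transitivity passes from `Φ` to `Ψ`.
For a uniform conjugacy this applies to `h` and to `h⁻¹`.
-/

open Function

section Semiconj

variable {G X Y : Type*} [Group G] [MetricSpace X] [MetricSpace Y]
  {Φ : G → X → X} {Ψ : G → Y → Y} {S : Finset G} {h : X → Y}

theorem exists_isPseudoOrbit_comp_of_semiconj (huc : UniformContinuous h)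
    (hconj : ∀ g, Semiconj h (Φ g) (Ψ g)) {δ : ℝ} (hδ : 0 < δ) :
    ∃ ε > 0, ∀ f, IsPseudoOrbit Φ S ε f → IsPseudoOrbit Ψ S δ (h ∘ f) := by
  obtain ⟨ε, hε, hεδ⟩ := Metric.uniformContinuous_iff.mp huc δ hδ
  refine ⟨ε, hε, fun f hf s hs g => ?_⟩
  rw [comp_apply, ← (hconj s).eq]
  exact hεδ (hf s hs g)

theorem ChainRel.map_of_semiconj (huc : UniformContinuous h)
    (hconj : ∀ g, Semiconj h (Φ g) (Ψ g)) {x y : X} (hxy : ChainRel Φ S x y) :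
    ChainRel Ψ S (h x) (h y) := by
  intro δ hδ
  obtain ⟨ε, hε, hpush⟩ := exists_isPseudoOrbit_comp_of_semiconj (S := S) huc hconj hδ
  obtain ⟨f, hf, a, b, hab, rfl, rfl⟩ := hxy ε hε
  exact ⟨h ∘ f, hpush f hf, a, b, hab, rfl, rfl⟩

theorem ChainTransitive.of_semiconj (hsurj : Surjective h) (huc : UniformContinuous h)
    (hconj : ∀ g, Semiconj h (Φ g) (Ψ g)) (hΦ : ChainTransitive Φ S) :
    ChainTransitive Ψ S := by
  intro y₁ y₂
  obtain ⟨x₁, rfl⟩ := hsurj y₁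
  obtain ⟨x₂, rfl⟩ := hsurj y₂
  exact (hΦ x₁ x₂).map_of_semiconj huc hconj

end Semiconj

theorem chainTransitive_iff_of_uniform_conjugacy_general
    {G X Y : Type*} [Group G] [MetricSpace X] [MetricSpace Y]
    (Φ : G → X → X) (Ψ : G → Y → Y) (S : Finset G)
    (h : X ≃ Y)
    (huc : UniformContinuous h)
    (huc' : UniformContinuous h.symm)
    (hconj : ∀ g : G, ∀ x : X, h (Φ g x) = Ψ g (h x)) :
    ChainTransitive Φ S ↔ ChainTransitive Ψ S :=
  ⟨ChainTransitive.of_semiconj h.surjective huc hconj,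
    ChainTransitive.of_semiconj h.symm.surjective huc' fun g =>
      Semiconj.inverse_left (hconj g) h.left_inv h.right_inv⟩

/-- Chain transitivity is invariant under uniform conjugacy. -/
theorem chainTransitive_iff_of_uniform_conjugacy
    {G X Y : Type*} [Group G] [MetricSpace X] [MetricSpace Y]
    (Φ : G → X → X) (Ψ : G → Y → Y) (S : Finset G)
    (hSsymm : ∀ s ∈ S, s⁻¹ ∈ S)
    (hSgen : Subgroup.closure (S : Set G) = ⊤)
    (hΦ1 : ∀ x : X, Φ 1 x = x)
    (hΦmul : ∀ g h : G, ∀ x : X, Φ (g * h) x = Φ g (Φ h x))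
    (hΦuc : ∀ g : G, UniformContinuous (Φ g))
    (hΨ1 : ∀ y : Y, Ψ 1 y = y)
    (hΨmul : ∀ g h : G, ∀ y : Y, Ψ (g * h) y = Ψ g (Ψ h y))
    (hΨuc : ∀ g : G, UniformContinuous (Ψ g))
    (h : X ≃ Y)
    (huc : UniformContinuous h)
    (huc' : UniformContinuous h.symm)
    (hconj : ∀ g : G, ∀ x : X, h (Φ g x) = Ψ g (h x)) :
    ChainTransitive Φ S ↔ ChainTransitive Ψ S :=
  chainTransitive_iff_of_uniform_conjugacy_general Φ Ψ S h huc huc' hconj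
end

section
/- Let G be a group with a finite symmetric generating set S and let Φ be a uniformly continuous action of G on a metric space (X,d). If Φ is commutative, then the chain recurrent set CR^S(Φ) is Φ-invariant, i.e. Φ_g(CR^S(Φ)) ⊆ CR^S(Φ) for all g ∈ G; moreover Φ_p(CR^S(Φ)) = CR^S(Φ) for every p ∈ S. -/
open Set

section ChainRecurrence

variable {G X : Type*} [Group G] [MetricSpace X] {Φ : G → X → X} {S : Finset G} {ψ : X → X}

theorem IsPseudoOrbit.comp_of_commute {δ ε : ℝ} {f : G → X}
    (hψ : ∀ ⦃a b⦄, dist a b < δ → dist (ψ a) (ψ b) < ε)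
    (hcomm : ∀ s ∈ S, ∀ x, Φ s (ψ x) = ψ (Φ s x)) (hf : IsPseudoOrbit Φ S δ f) :
    IsPseudoOrbit Φ S ε (ψ ∘ f) := by
  intro s hs g
  rw [Function.comp_apply, hcomm s hs]
  exact hψ (hf s hs g)

theorem ChainRel.map_of_commute (hψ : UniformContinuous ψ)
    (hcomm : ∀ s ∈ S, ∀ x, Φ s (ψ x) = ψ (Φ s x)) {x y : X} (hxy : ChainRel Φ S x y) :
    ChainRel Φ S (ψ x) (ψ y) := by
  intro ε hε
  obtain ⟨δ, hδ, hψδ⟩ := Metric.uniformContinuous_iff.mp hψ ε hε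
  obtain ⟨f, hf, h, k, hhk, rfl, rfl⟩ := hxy δ hδ
  exact ⟨ψ ∘ f, hf.comp_of_commute hψδ hcomm, h, k, hhk, rfl, rfl⟩

theorem mapsTo_chainRecurrentSet_of_commute (hψ : UniformContinuous ψ)
    (hcomm : ∀ s ∈ S, ∀ x, Φ s (ψ x) = ψ (Φ s x)) :
    MapsTo ψ (ChainRecurrentSet Φ S) (ChainRecurrentSet Φ S) :=
  fun _ hx => ChainRel.map_of_commute hψ hcomm hx

end ChainRecurrence

section GeneratedActions

variable {G α : Type*} [Group G] {Φ : G → α → α} {W : Set α}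

theorem mapsTo_of_closure_eq_top {S : Set G} (hSgen : Subgroup.closure S = ⊤)
    (hΦ1 : ∀ x, Φ 1 x = x) (hΦmul : ∀ g h x, Φ (g * h) x = Φ g (Φ h x))
    (hS : ∀ s ∈ S, MapsTo (Φ s) W W) (hSinv : ∀ s ∈ S, MapsTo (Φ s⁻¹) W W) (g : G) :
    MapsTo (Φ g) W W := by
  have hg : g ∈ Subgroup.closure S := hSgen ▸ Subgroup.mem_top g
  induction hg using Subgroup.closure_induction'' with
  | mem s hs => exact hS s hs
  | inv_mem s hs => exact hSinv s hs
  | one => exact fun x hx => (hΦ1 x).symm ▸ hx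
  | mul a b _ _ ha hb => exact fun x hx => (hΦmul a b x).symm ▸ ha (hb hx)

theorem image_eq_of_mapsTo_of_mapsTo_inv (hΦ1 : ∀ x, Φ 1 x = x)
    (hΦmul : ∀ g h x, Φ (g * h) x = Φ g (Φ h x)) {g : G} (hg : MapsTo (Φ g) W W)
    (hginv : MapsTo (Φ g⁻¹) W W) : Φ g '' W = W := by
  refine hg.image_subset.antisymm fun x hx => ⟨Φ g⁻¹ x, hginv hx, ?_⟩
  rw [← hΦmul, mul_inv_cancel, hΦ1]

end GeneratedActions

/-- For a commutative uniformly continuous action, the chain recurrent set is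
`Φ`-invariant, and `Φ_p(CR(Φ)) = CR(Φ)` for every generator `p ∈ S`. -/
theorem chainRecurrentSet_invariant_of_commutative
    {G X : Type*} [Group G] [MetricSpace X] (Φ : G → X → X) (S : Finset G)
    (hSsymm : ∀ s ∈ S, s⁻¹ ∈ S)
    (hSgen : Subgroup.closure (S : Set G) = ⊤)
    (hΦ1 : ∀ x : X, Φ 1 x = x)
    (hΦmul : ∀ g h : G, ∀ x : X, Φ (g * h) x = Φ g (Φ h x))
    (hΦuc : ∀ g : G, UniformContinuous (Φ g))
    (hcomm : ∀ s ∈ S, ∀ s' ∈ S, ∀ x : X, Φ s (Φ s' x) = Φ s' (Φ s x)) :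
    (∀ g : G, Φ g '' ChainRecurrentSet Φ S ⊆ ChainRecurrentSet Φ S) ∧
      ∀ p ∈ S, Φ p '' ChainRecurrentSet Φ S = ChainRecurrentSet Φ S := by
  have hgen : ∀ p ∈ S, MapsTo (Φ p) (ChainRecurrentSet Φ S) (ChainRecurrentSet Φ S) :=
    fun p hp => mapsTo_chainRecurrentSet_of_commute (hΦuc p) fun s hs => hcomm s hs p hp
  have hall : ∀ g, MapsTo (Φ g) (ChainRecurrentSet Φ S) (ChainRecurrentSet Φ S) :=
    mapsTo_of_closure_eq_top hSgen hΦ1 hΦmul hgen fun s hs => hgen _ (hSsymm s hs)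
  exact ⟨fun g => (hall g).image_subset,
    fun p _ => image_eq_of_mapsTo_of_mapsTo_inv hΦ1 hΦmul (hall p) (hall p⁻¹)⟩
end

section
/- Let X be a compact metric space, G a group with a finite symmetric generating set S, and Φ a continuous commutative expansive action of G on X such that the restricted action Φ|_{CR^S(Φ)} has the shadowing property with respect to S. Then CR^S(Φ) is isolated: there exists a closed neighbourhood U of CR^S(Φ) in X such that ⋂_{g∈G} Φ_g(U) = CR^S(Φ). -/
/-- `Φ` is expansive: some `c > 0` separates every pair of distinct points
along the action. -/
def Expansive {G X : Type*} [Group G] [MetricSpace X] (Φ : G → X → X) : Prop :=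
  ∃ c : ℝ, 0 < c ∧ ∀ x y : X, x ≠ y → ∃ g : G, dist (Φ g x) (Φ g y) > c

/-!
The chain recurrent set `A` is invariant, since every `Φ_g` commutes with the generators and so
carries pseudo orbits to pseudo orbits. If the orbit of `x` stays within a small `r` of `A`,
choosing for each `g` a point of `A` near `Φ_g x` gives a pseudo orbit in `A`; shadowing produces
`z ∈ A` whose orbit stays within the expansive constant of the orbit of `x`, so `x = z ∈ A`.
Hence the closed `r`-neighbourhood of `A` isolates it.
-/

open Metric

lemma exists_pos_forall_dist_lt_of_uniformContinuous {ι X Y : Type*}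
    [PseudoMetricSpace X] [PseudoMetricSpace Y] {f : ι → X → Y} (S : Finset ι)
    (hf : ∀ i ∈ S, UniformContinuous (f i)) {ε : ℝ} (hε : 0 < ε) :
    ∃ η > 0, ∀ i ∈ S, ∀ a b, dist a b < η → dist (f i a) (f i b) < ε := by
  have hS : UniformContinuous fun a (i : S) => f i a :=
    uniformContinuous_pi.2 fun i => hf i i.2
  obtain ⟨η, hη, h⟩ := uniformContinuous_iff.1 hS ε hε
  exact ⟨η, hη, fun i hi a b hab =>
    (dist_le_pi_dist (fun i : S => f i a) (fun i => f i b) ⟨i, hi⟩).trans_lt (h hab)⟩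

section GroupAction

variable {G X : Type*} [Group G] {Φ : G → X → X} {S : Finset G}

lemma apply_apply_generator_comm (hSgen : Subgroup.closure (S : Set G) = ⊤)
    (hΦ1 : ∀ x : X, Φ 1 x = x) (hΦmul : ∀ g h : G, ∀ x : X, Φ (g * h) x = Φ g (Φ h x))
    (hcomm : ∀ s ∈ S, ∀ s' ∈ S, ∀ x : X, Φ s (Φ s' x) = Φ s' (Φ s x)) (g : G) :
    ∀ s ∈ S, ∀ x, Φ g (Φ s x) = Φ s (Φ g x) := by
  have hg : g ∈ Subgroup.closure (S : Set G) := hSgen ▸ Subgroup.mem_top g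
  induction hg using Subgroup.closure_induction with
  | mem g hg => exact hcomm g hg
  | one => simp only [hΦ1, implies_true]
  | mul a b _ _ ha hb => intro s hs x; rw [hΦmul, hΦmul, hb s hs, ha s hs]
  | inv a _ ha =>
    intro s hs x
    calc Φ a⁻¹ (Φ s x) = Φ a⁻¹ (Φ s (Φ a (Φ a⁻¹ x))) := by rw [← hΦmul a, mul_inv_cancel, hΦ1]
      _ = Φ a⁻¹ (Φ a (Φ s (Φ a⁻¹ x))) := by rw [ha s hs]
      _ = Φ s (Φ a⁻¹ x) := by rw [← hΦmul, inv_mul_cancel, hΦ1]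

lemma iInter_image_eq (hΦ1 : ∀ x : X, Φ 1 x = x)
    (hΦmul : ∀ g h : G, ∀ x : X, Φ (g * h) x = Φ g (Φ h x)) (U : Set X) :
    ⋂ g : G, Φ g '' U = {x | ∀ g, Φ g x ∈ U} := by
  ext x
  simp only [Set.mem_iInter, Set.mem_ofPred_eq]
  constructor
  · intro hx g
    obtain ⟨u, hu, rfl⟩ := hx g⁻¹
    rwa [← hΦmul, mul_inv_cancel, hΦ1]
  · exact fun hx g => ⟨Φ g⁻¹ x, hx _, by rw [← hΦmul, mul_inv_cancel, hΦ1]⟩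

end GroupAction

section Action

variable {G X : Type*} [Group G] [MetricSpace X] {Φ : G → X → X} {S : Finset G}

def HasShadowingPropertyOn (Φ : G → X → X) (S : Finset G) (A : Set X) : Prop :=
  ∀ ε : ℝ, 0 < ε → ∃ δ : ℝ, 0 < δ ∧
    ∀ f : G → X, (∀ g : G, f g ∈ A) → IsPseudoOrbit Φ S δ f →
      ∃ x ∈ A, ∀ g : G, dist (Φ g x) (f g) < ε

def IsIsolated (Φ : G → X → X) (A : Set X) : Prop :=
  ∃ U : Set X, IsClosed U ∧ A ⊆ interior U ∧ (⋂ g : G, Φ g '' U) = A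

lemma IsPseudoOrbit.comp {h : X → X} {δ η : ℝ} {f : G → X} (hf : IsPseudoOrbit Φ S η f)
    (hcomm : ∀ s ∈ S, ∀ x, h (Φ s x) = Φ s (h x))
    (hh : ∀ a b, dist a b < η → dist (h a) (h b) < δ) :
    IsPseudoOrbit Φ S δ (h ∘ f) := fun s hs g => by
  simpa only [Function.comp_apply, hcomm s hs] using hh _ _ (hf s hs g)

lemma isPseudoOrbit_of_forall_dist_orbit_lt
    (hΦmul : ∀ g h : G, ∀ x : X, Φ (g * h) x = Φ g (Φ h x)) {x : X} {p : G → X}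
    {ε η δ : ℝ} (hp : ∀ g, dist (Φ g x) (p g) < η)
    (hmod : ∀ s ∈ S, ∀ a b, dist a b < η → dist (Φ s a) (Φ s b) < ε) (hδ : ε + η ≤ δ) :
    IsPseudoOrbit Φ S δ p := fun s hs g =>
  calc dist (Φ s (p g)) (p (s * g))
      ≤ dist (Φ s (p g)) (Φ s (Φ g x)) + dist (Φ (s * g) x) (p (s * g)) := by
        rw [hΦmul]; exact dist_triangle _ _ _
    _ < ε + η := add_lt_add (hmod s hs _ _ (by rw [dist_comm]; exact hp g)) (hp _)
    _ ≤ δ := hδ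

lemma ChainRel.map {h : X → X} (hh : UniformContinuous h)
    (hcomm : ∀ s ∈ S, ∀ x, h (Φ s x) = Φ s (h x)) {x y : X} (hxy : ChainRel Φ S x y) :
    ChainRel Φ S (h x) (h y) := by
  intro δ hδ
  obtain ⟨η, hη, hmod⟩ := uniformContinuous_iff.1 hh δ hδ
  obtain ⟨f, hf, k, l, hkl, rfl, rfl⟩ := hxy η hη
  exact ⟨h ∘ f, hf.comp hcomm fun _ _ h => hmod h, k, l, hkl, rfl, rfl⟩

lemma mapsTo_chainRecurrentSet (hSgen : Subgroup.closure (S : Set G) = ⊤)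
    (hΦ1 : ∀ x : X, Φ 1 x = x) (hΦmul : ∀ g h : G, ∀ x : X, Φ (g * h) x = Φ g (Φ h x))
    (hΦc : ∀ g : G, UniformContinuous (Φ g))
    (hcomm : ∀ s ∈ S, ∀ s' ∈ S, ∀ x : X, Φ s (Φ s' x) = Φ s' (Φ s x)) (g : G) :
    Set.MapsTo (Φ g) (ChainRecurrentSet Φ S) (ChainRecurrentSet Φ S) := fun _ hx =>
  ChainRel.map (hΦc g) (apply_apply_generator_comm hSgen hΦ1 hΦmul hcomm g) hx

lemma exists_pos_mem_of_forall_apply_mem_cthickening {A : Set X}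
    (hΦmul : ∀ g h : G, ∀ x : X, Φ (g * h) x = Φ g (Φ h x))
    (hΦc : ∀ s ∈ S, UniformContinuous (Φ s)) (hexp : Expansive Φ)
    (hshad : HasShadowingPropertyOn Φ S A) :
    ∃ r > 0, ∀ x, (∀ g, Φ g x ∈ cthickening r A) → x ∈ A := by
  obtain ⟨c, hc, hsep⟩ := hexp
  obtain ⟨δ, hδ, hδshad⟩ := hshad (c / 2) (half_pos hc)
  obtain ⟨β, hβ, hmod⟩ :=
    exists_pos_forall_dist_lt_of_uniformContinuous S hΦc (half_pos hδ)
  set η := min β (min (δ / 2) (c / 2))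
  have hη : 0 < η := lt_min hβ (lt_min (half_pos hδ) (half_pos hc))
  refine ⟨η / 2, half_pos hη, fun x hx => ?_⟩
  have hnear : ∀ g, ∃ p ∈ A, dist (Φ g x) p < η := fun g =>
    mem_thickening_iff.1 (cthickening_subset_thickening' hη (half_lt_self hη) A (hx g))
  choose p hpA hpx using hnear
  have hpo : IsPseudoOrbit Φ S δ p :=
    isPseudoOrbit_of_forall_dist_orbit_lt hΦmul hpx
      (fun s hs a b hab => hmod s hs a b (hab.trans_le (min_le_left _ _)))
      (by linarith [min_le_left (δ / 2) (c / 2), min_le_right β (min (δ / 2) (c / 2))])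
  obtain ⟨z, hzA, hz⟩ := hδshad p hpA hpo
  by_contra hxA
  obtain ⟨g, hg⟩ := hsep x z (fun h => hxA (h ▸ hzA))
  linarith [dist_triangle_right (Φ g x) (Φ g z) (p g), hpx g, hz g,
    min_le_right (δ / 2) (c / 2), min_le_right β (min (δ / 2) (c / 2))]

theorem isIsolated_of_hasShadowingPropertyOn {A : Set X} (hΦ1 : ∀ x : X, Φ 1 x = x)
    (hΦmul : ∀ g h : G, ∀ x : X, Φ (g * h) x = Φ g (Φ h x))
    (hΦc : ∀ s ∈ S, UniformContinuous (Φ s)) (hexp : Expansive Φ)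
    (hshad : HasShadowingPropertyOn Φ S A) (hA : ∀ g, Set.MapsTo (Φ g) A A) :
    IsIsolated Φ A := by
  obtain ⟨r, hr, hisol⟩ := exists_pos_mem_of_forall_apply_mem_cthickening hΦmul hΦc hexp hshad
  refine ⟨cthickening r A, isClosed_cthickening, ?_, ?_⟩
  · exact (self_subset_thickening hr A).trans
      (interior_maximal (thickening_subset_cthickening r A) isOpen_thickening)
  · rw [iInter_image_eq hΦ1 hΦmul]
    exact Set.Subset.antisymm hisol fun x hx g => self_subset_cthickening A (hA g hx)

end Action

theorem chainRecurrentSet_isolated_general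
    {G X : Type*} [Group G] [MetricSpace X] [CompactSpace X]
    (Φ : G → X → X) (S : Finset G)
    (hSgen : Subgroup.closure (S : Set G) = ⊤)
    (hΦ1 : ∀ x : X, Φ 1 x = x)
    (hΦmul : ∀ g h : G, ∀ x : X, Φ (g * h) x = Φ g (Φ h x))
    (hΦc : ∀ g : G, Continuous (Φ g))
    (hcomm : ∀ s ∈ S, ∀ s' ∈ S, ∀ x : X, Φ s (Φ s' x) = Φ s' (Φ s x))
    (hexp : Expansive Φ)
    (hshad : ∀ ε : ℝ, 0 < ε → ∃ δ : ℝ, 0 < δ ∧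
      ∀ f : G → X, (∀ g : G, f g ∈ ChainRecurrentSet Φ S) →
        IsPseudoOrbit Φ S δ f →
        ∃ x ∈ ChainRecurrentSet Φ S, ∀ g : G, dist (Φ g x) (f g) < ε) :
    ∃ U : Set X, IsClosed U ∧ ChainRecurrentSet Φ S ⊆ interior U ∧
      (⋂ g : G, Φ g '' U) = ChainRecurrentSet Φ S := by
  have hunif : ∀ g, UniformContinuous (Φ g) := fun g =>
    CompactSpace.uniformContinuous_of_continuous (hΦc g)
  exact isIsolated_of_hasShadowingPropertyOn hΦ1 hΦmul (fun s _ => hunif s) hexp hshad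
    (mapsTo_chainRecurrentSet hSgen hΦ1 hΦmul hunif hcomm)

/-- If `Φ` is a commutative expansive continuous action on a compact metric
space whose restriction to the chain recurrent set has the shadowing property,
then the chain recurrent set is isolated: it has a closed neighbourhood `U`
with `⋂_{g ∈ G} Φ_g(U) = CR(Φ)`. -/
theorem chainRecurrentSet_isolated
    {G X : Type*} [Group G] [MetricSpace X] [CompactSpace X]
    (Φ : G → X → X) (S : Finset G)
    (hSsymm : ∀ s ∈ S, s⁻¹ ∈ S)
    (hSgen : Subgroup.closure (S : Set G) = ⊤)
    (hΦ1 : ∀ x : X, Φ 1 x = x)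
    (hΦmul : ∀ g h : G, ∀ x : X, Φ (g * h) x = Φ g (Φ h x))
    (hΦc : ∀ g : G, Continuous (Φ g))
    (hcomm : ∀ s ∈ S, ∀ s' ∈ S, ∀ x : X, Φ s (Φ s' x) = Φ s' (Φ s x))
    (hexp : Expansive Φ)
    (hshad : ∀ ε : ℝ, 0 < ε → ∃ δ : ℝ, 0 < δ ∧
      ∀ f : G → X, (∀ g : G, f g ∈ ChainRecurrentSet Φ S) →
        IsPseudoOrbit Φ S δ f →
        ∃ x ∈ ChainRecurrentSet Φ S, ∀ g : G, dist (Φ g x) (f g) < ε) :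
    ∃ U : Set X, IsClosed U ∧ ChainRecurrentSet Φ S ⊆ interior U ∧
      (⋂ g : G, Φ g '' U) = ChainRecurrentSet Φ S :=
  chainRecurrentSet_isolated_general Φ S hSgen hΦ1 hΦmul hΦc hcomm hexp hshad
end

section
/- Let X be a compact metric space, G a group with a finite symmetric generating set S, and Φ a continuous action of G on X. Then the following are equivalent: (i) Φ is expansive; (ii) Φ admits a generator; (iii) Φ admits a weak generator. -/
/-- A finite open cover `Λ` of `X` is a generator for `Φ` if for every family
`{U_g}_{g ∈ G}` of members of `Λ`, the set `⋂_{g ∈ G} Φ_{g⁻¹}(closure U_g)`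
contains at most one point. -/
def IsGenerator {G X : Type*} [Group G] [MetricSpace X]
    (Φ : G → X → X) (Λ : Finset (Set X)) : Prop :=
  (∀ U ∈ Λ, IsOpen U) ∧ ⋃₀ (Λ : Set (Set X)) = Set.univ ∧
    ∀ U : G → Set X, (∀ g : G, U g ∈ Λ) →
      Set.Subsingleton (⋂ g : G, Φ g⁻¹ '' closure (U g))

/-- A finite open cover `Λ` of `X` is a weak generator for `Φ` if for every
family `{U_g}_{g ∈ G}` of members of `Λ`, the set `⋂_{g ∈ G} Φ_{g⁻¹}(U_g)`
contains at most one point. -/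
def IsWeakGenerator {G X : Type*} [Group G] [MetricSpace X]
    (Φ : G → X → X) (Λ : Finset (Set X)) : Prop :=
  (∀ U ∈ Λ, IsOpen U) ∧ ⋃₀ (Λ : Set (Set X)) = Set.univ ∧
    ∀ U : G → Set X, (∀ g : G, U g ∈ Λ) →
      Set.Subsingleton (⋂ g : G, Φ g⁻¹ '' U g)

/-! Generator ⇒ weak generator is immediate, since shrinking the sets shrinks the
intersections. If `c` is an expansivity constant, a finite cover by balls of radius `c / 4`
is a generator: two points of `⋂ g, Φ g⁻¹ '' closure (U g)` stay within `c / 2` of each other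
along the whole orbit. Conversely, if `δ` is a Lebesgue number of a weak generator, then
`δ / 2` is an expansivity constant: two points whose orbits stay `δ / 2`-close have
`Φ g x` and `Φ g y` in a common member `U g` for every `g`. -/

open Metric Set

section Action

variable {G X : Type*} [Group G] {Φ : G → X → X}

theorem image_inv_eq_preimage (hΦ1 : ∀ x : X, Φ 1 x = x)
    (hΦmul : ∀ g h : G, ∀ x : X, Φ (g * h) x = Φ g (Φ h x)) (g : G) (A : Set X) :
    Φ g⁻¹ '' A = Φ g ⁻¹' A :=
  congrFun (image_eq_preimage_of_inverse
    (fun x => by rw [← hΦmul, mul_inv_cancel, hΦ1])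
    (fun x => by rw [← hΦmul, inv_mul_cancel, hΦ1])) A

theorem mem_iInter_image_inv_iff (hΦ1 : ∀ x : X, Φ 1 x = x)
    (hΦmul : ∀ g h : G, ∀ x : X, Φ (g * h) x = Φ g (Φ h x)) (U : G → Set X) (x : X) :
    x ∈ ⋂ g, Φ g⁻¹ '' U g ↔ ∀ g, Φ g x ∈ U g := by
  simp only [image_inv_eq_preimage hΦ1 hΦmul, mem_iInter, mem_preimage]

theorem IsGenerator.isWeakGenerator [MetricSpace X] {Λ : Finset (Set X)}
    (h : IsGenerator Φ Λ) : IsWeakGenerator Φ Λ :=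
  ⟨h.1, h.2.1, fun U hU =>
    (h.2.2 U hU).anti (iInter_mono fun _ => image_mono subset_closure)⟩

theorem Expansive.exists_isGenerator [MetricSpace X] [CompactSpace X]
    (hΦ1 : ∀ x : X, Φ 1 x = x)
    (hΦmul : ∀ g h : G, ∀ x : X, Φ (g * h) x = Φ g (Φ h x)) (hexp : Expansive Φ) :
    ∃ Λ : Finset (Set X), IsGenerator Φ Λ := by
  classical
  obtain ⟨c, hc, hsep⟩ := hexp
  obtain ⟨t, ht⟩ := isCompact_univ.elim_nhds_subcover (fun x : X => ball x (c / 4))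
    fun x _ => ball_mem_nhds x (by positivity)
  refine ⟨t.image (ball · (c / 4)), ?_, ?_, fun U hU x hx y hy => ?_⟩
  · simp only [Finset.mem_image]
    rintro _ ⟨z, -, rfl⟩
    exact isOpen_ball
  · simpa [sUnion_image, eq_univ_iff_forall] using ht
  · by_contra hne
    obtain ⟨g, hg⟩ := hsep x y hne
    obtain ⟨z, -, hz⟩ := Finset.mem_image.1 (hU g)
    have hclosure : closure (U g) ⊆ closedBall z (c / 4) :=
      hz ▸ closure_ball_subset_closedBall
    have hxz := hclosure (((mem_iInter_image_inv_iff hΦ1 hΦmul _ x).1 hx) g)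
    have hyz := hclosure (((mem_iInter_image_inv_iff hΦ1 hΦmul _ y).1 hy) g)
    have : dist (Φ g x) (Φ g y) ≤ c / 4 + c / 4 :=
      (dist_triangle_right _ _ z).trans (add_le_add hxz hyz)
    linarith

theorem IsWeakGenerator.expansive [MetricSpace X] [CompactSpace X]
    (hΦ1 : ∀ x : X, Φ 1 x = x)
    (hΦmul : ∀ g h : G, ∀ x : X, Φ (g * h) x = Φ g (Φ h x)) {Λ : Finset (Set X)}
    (hΛ : IsWeakGenerator Φ Λ) : Expansive Φ := by
  obtain ⟨hopen, hcover, hsub⟩ := hΛ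
  obtain ⟨δ, hδ, hleb⟩ :=
    lebesgue_number_lemma_of_metric_sUnion isCompact_univ hopen hcover.ge
  refine ⟨δ / 2, by positivity, fun x y hne => ?_⟩
  by_contra! hclose
  choose U hUΛ hball using fun g : G => hleb (Φ g x) (mem_univ _)
  refine hne (hsub U hUΛ ((mem_iInter_image_inv_iff hΦ1 hΦmul U x).2 fun g => ?_)
    ((mem_iInter_image_inv_iff hΦ1 hΦmul U y).2 fun g => ?_))
  · exact hball g (mem_ball_self hδ)
  · exact hball g (mem_ball_comm.1 ((hclose g).trans_lt (half_lt_self hδ)))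

end Action

theorem expansive_iff_generator_iff_weakGenerator_general
    {G X : Type*} [Group G] [MetricSpace X] [CompactSpace X]
    (Φ : G → X → X)
    (hΦ1 : ∀ x : X, Φ 1 x = x)
    (hΦmul : ∀ g h : G, ∀ x : X, Φ (g * h) x = Φ g (Φ h x)) :
    (Expansive Φ ↔ ∃ Λ : Finset (Set X), IsGenerator Φ Λ) ∧
      ((∃ Λ : Finset (Set X), IsGenerator Φ Λ) ↔
        ∃ Λ : Finset (Set X), IsWeakGenerator Φ Λ) := by
  have generator_of_expansive := Expansive.exists_isGenerator hΦ1 hΦmul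
  have expansive_of_weak : (∃ Λ, IsWeakGenerator Φ Λ) → Expansive Φ :=
    fun ⟨_, hΛ⟩ => hΛ.expansive hΦ1 hΦmul
  have weak_of_generator : (∃ Λ, IsGenerator Φ Λ) → ∃ Λ, IsWeakGenerator Φ Λ :=
    fun ⟨Λ, hΛ⟩ => ⟨Λ, hΛ.isWeakGenerator⟩
  exact ⟨⟨generator_of_expansive, expansive_of_weak ∘ weak_of_generator⟩,
    ⟨weak_of_generator, generator_of_expansive ∘ expansive_of_weak⟩⟩

/-- For a continuous action on a compact metric space, expansivity, existence
of a generator, and existence of a weak generator are equivalent. -/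
theorem expansive_iff_generator_iff_weakGenerator
    {G X : Type*} [Group G] [MetricSpace X] [CompactSpace X]
    (Φ : G → X → X) (S : Finset G)
    (hSsymm : ∀ s ∈ S, s⁻¹ ∈ S)
    (hSgen : Subgroup.closure (S : Set G) = ⊤)
    (hΦ1 : ∀ x : X, Φ 1 x = x)
    (hΦmul : ∀ g h : G, ∀ x : X, Φ (g * h) x = Φ g (Φ h x))
    (hΦc : ∀ g : G, Continuous (Φ g)) :
    (Expansive Φ ↔ ∃ Λ : Finset (Set X), IsGenerator Φ Λ) ∧
      ((∃ Λ : Finset (Set X), IsGenerator Φ Λ) ↔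
        ∃ Λ : Finset (Set X), IsWeakGenerator Φ Λ) :=
  expansive_iff_generator_iff_weakGenerator_general Φ hΦ1 hΦmul
end

section
/- Let G be a group with a finite symmetric generating set S, let Φ be a commutative uniformly continuous action of G on a metric space (X,d), and let m ∈ ℤ∖{0}. Define the action Φ^m by (Φ^m)_g = Φ_{g^m} for g ∈ G. Then Φ is expansive if and only if Φ^m is expansive. -/
/-!
The generators act by commuting maps, so `Φ` factors through a finitely generated abelian group
of permutations of `X`. There the `m`-th powers form a subgroup of finite index (the quotient is
finitely generated and torsion), so every `Φ_h` is `Φ_t ∘ Φ_{g^m}` with `t` from a finite set of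
coset representatives. A common modulus of uniform continuity `δ` of these finitely many `Φ_t`
turns an expansivity constant `c` of `Φ` into the constant `δ / 2` for `Φ^m`.
-/

open scoped IsMulCommutative

theorem CommGroup.finite_quotient_range_zpowGroupHom {A : Type*} [CommGroup A] [Group.FG A]
    {m : ℤ} (hm : m ≠ 0) : Finite (A ⧸ (zpowGroupHom m : A →* A).range) := by
  refine CommGroup.finite_of_fg_isMulTorsion _ fun q ↦ isOfFinOrder_iff_zpow_eq_one.2 ⟨m, hm, ?_⟩
  induction q using QuotientGroup.induction_on with
  | H a => exact (QuotientGroup.eq_one_iff _).2 ⟨a, rfl⟩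

theorem MonoidHom.exists_finite_forall_eq_mul_zpow {G M : Type*} [Group G] [Group M] [Group.FG G]
    (f : G →* M) [IsMulCommutative f.range] {m : ℤ} (hm : m ≠ 0) :
    ∃ T : Set G, T.Finite ∧ ∀ h, ∃ t ∈ T, ∃ g, f h = f t * f (g ^ m) := by
  set B := (zpowGroupHom m : f.range →* f.range).range
  have : Finite (f.range ⧸ B) := CommGroup.finite_quotient_range_zpowGroupHom hm
  let rep (q : f.range ⧸ B) : G := Function.surjInv f.rangeRestrict_surjective q.out
  have hrep (q : f.range ⧸ B) : f (rep q) = q.out :=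
    congrArg Subtype.val (Function.surjInv_eq f.rangeRestrict_surjective q.out)
  refine ⟨Set.range rep, Set.finite_range _, fun h ↦ ?_⟩
  obtain ⟨⟨_, a, rfl⟩, hout⟩ := QuotientGroup.mk_out_eq_mul B (f.rangeRestrict h)
  obtain ⟨g, rfl⟩ := f.rangeRestrict_surjective a
  refine ⟨_, Set.mem_range_self (f.rangeRestrict h : f.range ⧸ B), g⁻¹, ?_⟩
  rw [map_zpow, map_inv, hrep, hout]
  simp

theorem MonoidHom.isMulCommutative_range_of_closure_eq_top {G M : Type*} [Group G] [Group M]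
    (f : G →* M) {S : Set G} (hS : Subgroup.closure S = ⊤)
    (hcomm : ∀ s ∈ S, ∀ s' ∈ S, f s * f s' = f s' * f s) : IsMulCommutative f.range := by
  rw [f.range_eq_map, ← hS, MonoidHom.map_closure]
  exact Subgroup.isMulCommutative_closure (by simpa using hcomm)

theorem Expansive.of_forall_eq_comp {G H X ι : Type*} [Group G] [Group H] [MetricSpace X]
    [Finite ι] {Φ : G → X → X} {Ψ : H → X → X} (t : ι → X → X)
    (ht : ∀ i, UniformContinuous (t i)) (hΦ : ∀ g, ∃ i h, ∀ x, Φ g x = t i (Ψ h x))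
    (hexp : Expansive Φ) : Expansive Ψ := by
  have := Fintype.ofFinite ι
  obtain ⟨c, hc, hsep⟩ := hexp
  obtain ⟨δ, hδ, hδc⟩ := Metric.uniformContinuous_iff.1
    (uniformContinuous_pi.2 ht : UniformContinuous fun x i ↦ t i x) c hc
  refine ⟨δ / 2, half_pos hδ, fun x y hxy ↦ ?_⟩
  obtain ⟨g, hg⟩ := hsep x y hxy
  obtain ⟨i, h, hgi⟩ := hΦ g
  refine ⟨h, not_le.1 fun hle ↦ hg.not_gt ?_⟩
  rw [hgi, hgi]
  exact (dist_le_pi_dist _ _ i).trans_lt (hδc (hle.trans_lt (half_lt_self hδ)))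

theorem expansive_iff_expansive_zpow_general
    {G X : Type*} [Group G] [MetricSpace X]
    (Φ : G → X → X) (S : Finset G) (m : ℤ) (hm : m ≠ 0)
    (hSgen : Subgroup.closure (S : Set G) = ⊤)
    (hΦ1 : ∀ x : X, Φ 1 x = x)
    (hΦmul : ∀ g h : G, ∀ x : X, Φ (g * h) x = Φ g (Φ h x))
    (hΦuc : ∀ g : G, UniformContinuous (Φ g))
    (hcomm : ∀ s ∈ S, ∀ s' ∈ S, ∀ x : X, Φ s (Φ s' x) = Φ s' (Φ s x)) :
    Expansive Φ ↔ Expansive (fun g : G => Φ (g ^ m)) := by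
  let _ : MulAction G X := { smul := Φ, one_smul := hΦ1, mul_smul := hΦmul }
  have : Group.FG G := Group.fg_iff.2 ⟨S, hSgen, S.finite_toSet⟩
  have := (MulAction.toPermHom G X).isMulCommutative_range_of_closure_eq_top hSgen
    fun s hs s' hs' ↦ Equiv.ext (hcomm s hs s' hs')
  obtain ⟨T, hT, hdecomp⟩ := (MulAction.toPermHom G X).exists_finite_forall_eq_mul_zpow hm
  have := hT.to_subtype
  refine ⟨Expansive.of_forall_eq_comp (fun t : T ↦ Φ t) (fun t ↦ hΦuc t) fun h ↦ ?_,
    Expansive.of_forall_eq_comp (fun _ : Unit ↦ id) (fun _ ↦ uniformContinuous_id)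
      fun g ↦ ⟨(), g ^ m, fun _ ↦ rfl⟩⟩
  obtain ⟨t, ht, g, hg⟩ := hdecomp h
  exact ⟨⟨t, ht⟩, g, fun x ↦ congr($hg x)⟩

/-- For a commutative uniformly continuous action `Φ` and `m ∈ ℤ \ {0}`,
`Φ` is expansive iff the `m`-th power action `(Φ^m)_g = Φ_{g^m}` is expansive. -/
theorem expansive_iff_expansive_zpow
    {G X : Type*} [Group G] [MetricSpace X]
    (Φ : G → X → X) (S : Finset G) (m : ℤ) (hm : m ≠ 0)
    (hSsymm : ∀ s ∈ S, s⁻¹ ∈ S)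
    (hSgen : Subgroup.closure (S : Set G) = ⊤)
    (hΦ1 : ∀ x : X, Φ 1 x = x)
    (hΦmul : ∀ g h : G, ∀ x : X, Φ (g * h) x = Φ g (Φ h x))
    (hΦuc : ∀ g : G, UniformContinuous (Φ g))
    (hcomm : ∀ s ∈ S, ∀ s' ∈ S, ∀ x : X, Φ s (Φ s' x) = Φ s' (Φ s x)) :
    Expansive Φ ↔ Expansive (fun g : G => Φ (g ^ m)) :=
  expansive_iff_expansive_zpow_general Φ S m hm hSgen hΦ1 hΦmul hΦuc hcomm
end

section
/- Let G be a group with a finite symmetric generating set S, let X be a metric space in which every closed ball is compact, and let Φ be a uniformly continuous action of G on X that is expansive with expansive constant c, 0 < c < 1, i.e. for all distinct x, y ∈ X there is g ∈ G with d(Φ_g(x), Φ_g(y)) > c. Then for each x ∈ X and each ε > 0 there exists n ≥ 0 such that for every x' ∈ X, if sup_{g∈G_n} min{d(Φ_g(x), Φ_g(x')), 1} ≤ c, then min{d(x, x'), 1} < ε. Here G_n = {g ∈ G : L(g) ≤ n} where L(g) is the word length of g with respect to S. -/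
/-!
Suppose no `n` works. Then there are points `u n`, all within `c` of `x` (take `g = 1`) but at
distance at least `ε` from it, that `c`-shadow `x` along the word ball `G_n`. Every `g` lies in
`G_n` for large `n`, so any cluster point `y` of `u` satisfies `d(Φ_g x, Φ_g y) ≤ c` for all `g`,
hence `y = x` by expansivity. Closed balls being compact, `u n → x`, a contradiction.
-/

open Filter Topology Metric

/-- `g ∈ G_n`: `g` has word length at most `n` with respect to the generating
set `S`, i.e. `g` is a product of at most `n` elements of `S`. -/
def InWordBall {G : Type*} [Group G] (S : Finset G) (n : ℕ) (g : G) : Prop :=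
  ∃ l : List G, (∀ s ∈ l, s ∈ S) ∧ l.length ≤ n ∧ l.prod = g

section WordBall

variable {G : Type*} [Group G] {S : Finset G}

theorem inWordBall_one (S : Finset G) (n : ℕ) : InWordBall S n 1 :=
  ⟨[], by simp⟩

theorem InWordBall.mono {n m : ℕ} {g : G} (hnm : n ≤ m) (hg : InWordBall S n g) :
    InWordBall S m g :=
  let ⟨l, hlS, hln, hl⟩ := hg
  ⟨l, hlS, hln.trans hnm, hl⟩

theorem exists_inWordBall (hSsymm : ∀ s ∈ S, s⁻¹ ∈ S)
    (hSgen : Subgroup.closure (S : Set G) = ⊤) (g : G) : ∃ n, InWordBall S n g := by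
  have hg : g ∈ Submonoid.closure ((S : Set G) ∪ (S : Set G)⁻¹) := by
    rw [← Subgroup.closure_toSubmonoid, hSgen]
    trivial
  obtain ⟨l, hl, rfl⟩ := Submonoid.exists_list_of_mem_closure hg
  refine ⟨l.length, l, fun s hs => ?_, le_rfl, rfl⟩
  rcases hl s hs with hS | hSinv
  · exact hS
  · simpa using hSsymm s⁻¹ hSinv

theorem eventually_inWordBall (hSsymm : ∀ s ∈ S, s⁻¹ ∈ S)
    (hSgen : Subgroup.closure (S : Set G) = ⊤) (g : G) : ∀ᶠ n in atTop, InWordBall S n g :=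
  let ⟨n, hn⟩ := exists_inWordBall hSsymm hSgen g
  eventually_atTop.2 ⟨n, fun _ hm => hn.mono hm⟩

end WordBall

theorem tendsto_of_eventually_dist_le_of_expansive {ι X Y α : Type*} [TopologicalSpace X]
    [PseudoMetricSpace Y] {f : ι → X → Y} (hf : ∀ i, Continuous (f i)) {c : ℝ}
    (hexp : ∀ x y : X, x ≠ y → ∃ i, c < dist (f i x) (f i y))
    {l : Filter α} {u : α → X} {K : Set X} (hK : IsCompact K) (huK : ∀ᶠ a in l, u a ∈ K)
    {x : X} (hshadow : ∀ i, ∀ᶠ a in l, dist (f i x) (f i (u a)) ≤ c) :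
    Tendsto u l (𝓝 x) := by
  refine hK.tendsto_nhds_of_unique_mapClusterPt huK fun y _ hy => ?_
  by_contra hyx
  obtain ⟨i, hi⟩ := hexp x y (Ne.symm hyx)
  have hclosed : IsClosed {z | dist (f i x) (f i z) ≤ c} :=
    isClosed_le (continuous_const.dist (hf i)) continuous_const
  exact hi.not_ge (hclosed.mem_of_mapClusterPt hy (hshadow i))

theorem exists_wordBall_expansivity_radius_general
    {G X : Type*} [Group G] [MetricSpace X] [ProperSpace X]
    (Φ : G → X → X) (S : Finset G)
    (hSsymm : ∀ s ∈ S, s⁻¹ ∈ S)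
    (hSgen : Subgroup.closure (S : Set G) = ⊤)
    (hΦ1 : ∀ x : X, Φ 1 x = x)
    (hΦuc : ∀ g : G, UniformContinuous (Φ g))
    (c : ℝ) (hc1 : c < 1)
    (hexp : ∀ x y : X, x ≠ y → ∃ g : G, dist (Φ g x) (Φ g y) > c) :
    ∀ x : X, ∀ ε : ℝ, 0 < ε → ∃ n : ℕ, ∀ x' : X,
      (∀ g : G, InWordBall S n g → min (dist (Φ g x) (Φ g x')) 1 ≤ c) →
      min (dist x x') 1 < ε := by
  intro x ε hε
  by_contra! h
  choose u hshadow hfar using h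
  have hdist : ∀ n g, InWordBall S n g → dist (Φ g x) (Φ g (u n)) ≤ c := fun n g hg =>
    (min_le_iff.1 (hshadow n g hg)).resolve_right hc1.not_ge
  have hball : ∀ n, u n ∈ closedBall x c := fun n => by
    simpa [hΦ1, dist_comm] using hdist n 1 (inWordBall_one S n)
  have hu : Tendsto u atTop (𝓝 x) :=
    tendsto_of_eventually_dist_le_of_expansive (fun g => (hΦuc g).continuous) hexp
      (isCompact_closedBall x c) (Eventually.of_forall hball)
      fun g => (eventually_inWordBall hSsymm hSgen g).mono fun n hn => hdist n g hn
  obtain ⟨n, hn⟩ := (hu.eventually (ball_mem_nhds x hε)).exists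
  exact (hfar n).not_gt ((min_le_left _ _).trans_lt (mem_ball'.1 hn))

/-- Lemma: for an expansive uniformly continuous action (with expansive
constant `0 < c < 1`) on a metric space whose closed balls are compact, for
each `x` and `ε > 0` there is `n` such that if
`sup_{g ∈ G_n} min(d(Φ_g x, Φ_g x'), 1) ≤ c` then `min(d(x, x'), 1) < ε`. -/
theorem exists_wordBall_expansivity_radius
    {G X : Type*} [Group G] [MetricSpace X] [ProperSpace X]
    (Φ : G → X → X) (S : Finset G)
    (hSsymm : ∀ s ∈ S, s⁻¹ ∈ S)
    (hSgen : Subgroup.closure (S : Set G) = ⊤)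
    (hΦ1 : ∀ x : X, Φ 1 x = x)
    (hΦmul : ∀ g h : G, ∀ x : X, Φ (g * h) x = Φ g (Φ h x))
    (hΦuc : ∀ g : G, UniformContinuous (Φ g))
    (c : ℝ) (hc0 : 0 < c) (hc1 : c < 1)
    (hexp : ∀ x y : X, x ≠ y → ∃ g : G, dist (Φ g x) (Φ g y) > c) :
    ∀ x : X, ∀ ε : ℝ, 0 < ε → ∃ n : ℕ, ∀ x' : X,
      (∀ g : G, InWordBall S n g → min (dist (Φ g x) (Φ g x')) 1 ≤ c) →
      min (dist x x') 1 < ε :=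
  exists_wordBall_expansivity_radius_general Φ S hSsymm hSgen hΦ1 hΦuc c hc1 hexp
end

section
/- Let G be a group with a finite symmetric generating set S, let Φ be a uniformly continuous action of G on a metric space (X,d), let δ > 0 and x, y ∈ X. If x R^S_δ y, i.e. there exist a δ-pseudo orbit f of Φ with respect to S and distinct h, k ∈ G with f(h) = x and f(k) = y, then there exist a weak δ-chain of Φ from x to y and a weak δ-chain of Φ from y to x with respect to S. -/
/-- A weak `δ`-chain of `Φ` from `x` to `y` with respect to `S`: a finite
sequence `x = x_0, x_1, …, x_k = y` together with generators
`s_0, …, s_{k-1} ∈ S` such that `d(Φ_{s_i}(x_i), x_{i+1}) < δ` for all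
`0 ≤ i < k`. -/
def WeakChain {G X : Type*} [Group G] [MetricSpace X]
    (Φ : G → X → X) (S : Finset G) (δ : ℝ) (x y : X) : Prop :=
  ∃ (k : ℕ) (xs : ℕ → X) (ss : ℕ → G), xs 0 = x ∧ xs k = y ∧
    ∀ i < k, ss i ∈ S ∧ dist (Φ (ss i) (xs i)) (xs (i + 1)) < δ

/-! A pseudo orbit `f` turns every word `s₁ ⋯ sₙ` in the generators into a weak chain
`f h, f (sₙ h), …, f (s₁ ⋯ sₙ h)`. Since `S` is symmetric and generates `G`, every `k h⁻¹` is such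
a word, so there is a weak chain from `f h` to `f k` for all `h, k`, in either order. -/

namespace WeakChain

variable {G X : Type*} [Group G] [MetricSpace X] {Φ : G → X → X} {S : Finset G} {δ : ℝ}

lemma refl (x : X) : WeakChain Φ S δ x x :=
  ⟨0, fun _ => x, fun _ => 1, rfl, rfl, fun i hi => absurd hi i.not_lt_zero⟩

lemma snoc {x y z : X} {s : G} (hc : WeakChain Φ S δ x y) (hs : s ∈ S)
    (hd : dist (Φ s y) z < δ) : WeakChain Φ S δ x z := by
  obtain ⟨k, xs, ss, h0, hk, hstep⟩ := hc
  refine ⟨k + 1, fun i => if i ≤ k then xs i else z, fun i => if i < k then ss i else s,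
    by simp [h0], by simp, fun i hi => ?_⟩
  rcases Nat.lt_succ_iff_lt_or_eq.mp hi with hi | rfl
  · simpa [hi, hi.le, Nat.succ_le_of_lt hi] using hstep i hi
  · simpa [hk] using ⟨hs, hd⟩

end WeakChain

namespace IsPseudoOrbit

variable {G X : Type*} [Group G] [MetricSpace X] {Φ : G → X → X} {S : Finset G} {δ : ℝ}
  {f : G → X}

lemma weakChain_mul (hf : IsPseudoOrbit Φ S δ f) (hS : ∀ s ∈ S, s⁻¹ ∈ S) {g : G}
    (hg : g ∈ Subgroup.closure (S : Set G)) (h : G) : WeakChain Φ S δ (f h) (f (g * h)) := by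
  have extend : ∀ s ∈ S, ∀ y : G, WeakChain Φ S δ (f h) (f (y * h)) →
      WeakChain Φ S δ (f h) (f (s * y * h)) := fun s hs y hc => by
    simpa only [mul_assoc] using hc.snoc hs (hf s hs (y * h))
  induction hg using Subgroup.closure_induction_left with
  | one => simpa only [one_mul] using WeakChain.refl (f h)
  | mul_left s hs y _ ih => exact extend s hs y ih
  | inv_mul_cancel s hs y _ ih => exact extend s⁻¹ (hS s hs) y ih

lemma weakChain (hf : IsPseudoOrbit Φ S δ f) (hS : ∀ s ∈ S, s⁻¹ ∈ S)
    (hgen : Subgroup.closure (S : Set G) = ⊤) (h k : G) : WeakChain Φ S δ (f h) (f k) := by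
  have hkh : k * h⁻¹ ∈ Subgroup.closure (S : Set G) := hgen ▸ Subgroup.mem_top _
  simpa only [inv_mul_cancel_right] using hf.weakChain_mul hS hkh h

end IsPseudoOrbit

theorem weakChain_of_relDelta_general
    {G X : Type*} [Group G] [MetricSpace X]
    (Φ : G → X → X) (S : Finset G)
    (hSsymm : ∀ s ∈ S, s⁻¹ ∈ S)
    (hSgen : Subgroup.closure (S : Set G) = ⊤)
    (δ : ℝ) (x y : X)
    (hrel : RelDelta Φ S δ x y) :
    WeakChain Φ S δ x y ∧ WeakChain Φ S δ y x := by
  obtain ⟨f, hf, h, k, -, rfl, rfl⟩ := hrel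
  exact ⟨hf.weakChain hSsymm hSgen h k, hf.weakChain hSsymm hSgen k h⟩

/-- If `x R^S_δ y`, then there are weak `δ`-chains of `Φ` from `x` to `y` and
from `y` to `x`. -/
theorem weakChain_of_relDelta
    {G X : Type*} [Group G] [MetricSpace X]
    (Φ : G → X → X) (S : Finset G)
    (hSsymm : ∀ s ∈ S, s⁻¹ ∈ S)
    (hSgen : Subgroup.closure (S : Set G) = ⊤)
    (hΦ1 : ∀ x : X, Φ 1 x = x)
    (hΦmul : ∀ g h : G, ∀ x : X, Φ (g * h) x = Φ g (Φ h x))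
    (hΦuc : ∀ g : G, UniformContinuous (Φ g))
    (δ : ℝ) (hδ : 0 < δ) (x y : X)
    (hrel : RelDelta Φ S δ x y) :
    WeakChain Φ S δ x y ∧ WeakChain Φ S δ y x :=
  weakChain_of_relDelta_general Φ S hSsymm hSgen δ x y hrel
end
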